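/- Let F be a field, V an infinite-dimensional F-vector space, V* its dual, V̄ = V ⊕ V*, and f the alternating bilinear form on V̄ given by f((a,α),(b,β)) = α(b) − β(a). Then every generator of the symplectic polar space S_f admits a complement: for every maximal totally f-isotropic subspace W of V̄ there exists a maximal totally f-isotropic subspace W' with W ∩ W' = 0 and W + W' = V̄. -/

import Mathlib

/-- The symplectic form `f((a,α),(b,β)) = α(b) − β(a)` on `V̄ = V ⊕ V*`. -/
def symForm {F V : Type*} [Field F] [AddCommGroup V] [Module F V]
    (p q : V × Module.Dual F V) : F :=
  p.2 q.1 - q.2 p.1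

/-- A subspace of `V̄` is totally `f`-isotropic. -/
def SymTotIso {F V : Type*} [Field F] [AddCommGroup V] [Module F V]
    (W : Submodule F (V × Module.Dual F V)) : Prop :=
  ∀ x ∈ W, ∀ y ∈ W, symForm x y = 0

/-- A generator of the symplectic polar space `S_f`: a maximal totally
`f`-isotropic subspace of `V̄`. -/
def SymGen {F V : Type*} [Field F] [AddCommGroup V] [Module F V]
    (W : Submodule F (V × Module.Dual F V)) : Prop :=
  SymTotIso W ∧
    ∀ W' : Submodule F (V × Module.Dual F V), SymTotIso W' → W ≤ W' → W' = W

/-!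
Project `W` to `A = π₁(W) ≤ V` and choose a complement `B` of `A`. Then `W' = B × B⁰` is a
generator for any subspace `B`, and it is complementary to `W`: on the first factor because
`V = A ⊕ B`, on the second because `V* = A⁰ ⊕ B⁰` and, by maximality of `W`, the elements
`(0, γ)` of `W` are exactly those with `γ ∈ A⁰`.
-/

section

variable {F V : Type*} [Field F] [AddCommGroup V] [Module F V]

open Module Submodule

theorem symForm_swap (p q : V × Dual F V) : symForm q p = -symForm p q := by
  simp only [symForm]; ring

theorem symForm_add_left (p p' q : V × Dual F V) :
    symForm (p + p') q = symForm p q + symForm p' q := by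
  simp only [symForm, Prod.fst_add, Prod.snd_add, map_add, LinearMap.add_apply]; ring

theorem symForm_smul_left (c : F) (p q : V × Dual F V) :
    symForm (c • p) q = c * symForm p q := by
  simp only [symForm, Prod.smul_fst, Prod.smul_snd, map_smul, LinearMap.smul_apply,
    smul_eq_mul]; ring

theorem symForm_add_right (p q q' : V × Dual F V) :
    symForm p (q + q') = symForm p q + symForm p q' := by
  rw [symForm_swap, symForm_add_left, symForm_swap q, symForm_swap q', neg_add]

theorem symForm_smul_right (c : F) (p q : V × Dual F V) :
    symForm p (c • q) = c * symForm p q := by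
  rw [symForm_swap, symForm_smul_left, symForm_swap q, mul_neg]

theorem symForm_self (p : V × Dual F V) : symForm p p = 0 := sub_self _

theorem symForm_zero_mk (ξ : Dual F V) (p : V × Dual F V) : symForm (0, ξ) p = ξ p.1 := by
  simp [symForm]

theorem symTotIso_prod_dualAnnihilator (B : Submodule F V) :
    SymTotIso (B.prod B.dualAnnihilator) := by
  rintro ⟨x, ξ⟩ ⟨hx, hξ⟩ ⟨y, η⟩ ⟨hy, hη⟩
  simp [symForm, (mem_dualAnnihilator _).mp hξ y hy, (mem_dualAnnihilator _).mp hη x hx]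

theorem symGen_prod_dualAnnihilator (B : Submodule F V) :
    SymGen (B.prod B.dualAnnihilator) := by
  refine ⟨symTotIso_prod_dualAnnihilator B, fun W hW hle => le_antisymm ?_ hle⟩
  rintro ⟨x, ξ⟩ hxξ
  have hx : x ∈ B := by
    rw [← Subspace.forall_mem_dualAnnihilator_apply_eq_zero_iff]
    intro β hβ
    have hβW : ((0 : V), β) ∈ W := hle (mem_prod.mpr ⟨B.zero_mem, hβ⟩)
    simpa [symForm_zero_mk] using hW _ hβW _ hxξ
  have hξ : ((0 : V), ξ) ∈ W := by
    have hxW : ((x, 0) : V × Dual F V) ∈ W := hle (mem_prod.mpr ⟨hx, zero_mem _⟩)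
    simpa using W.sub_mem hxξ hxW
  refine ⟨hx, (mem_dualAnnihilator _).mpr fun b hb => ?_⟩
  have hbW : ((b, 0) : V × Dual F V) ∈ W := hle (mem_prod.mpr ⟨hb, zero_mem _⟩)
  simpa [symForm_zero_mk] using hW _ hξ _ hbW

theorem SymTotIso.sup_span_singleton {W : Submodule F (V × Dual F V)} (hW : SymTotIso W)
    {z : V × Dual F V} (hz : ∀ w ∈ W, symForm w z = 0) : SymTotIso (W ⊔ span F {z}) := by
  have key : ∀ w ∈ W, ∀ w' ∈ W, ∀ c d : F, symForm (w + c • z) (w' + d • z) = 0 := by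
    intro w hw w' hw' c d
    have hz' : symForm z w' = 0 := by rw [symForm_swap, hz w' hw', neg_zero]
    simp only [symForm_add_left, symForm_add_right, symForm_smul_left, symForm_smul_right,
      symForm_self, hW w hw w' hw', hz w hw, hz']
    ring
  rintro _ hx _ hy
  obtain ⟨w, hw, _, hs, rfl⟩ := mem_sup.mp hx
  obtain ⟨w', hw', _, hs', rfl⟩ := mem_sup.mp hy
  obtain ⟨c, rfl⟩ := mem_span_singleton.mp hs
  obtain ⟨d, rfl⟩ := mem_span_singleton.mp hs'
  exact key w hw w' hw' c d

theorem SymTotIso.mem_dualAnnihilator_map_fst {W : Submodule F (V × Dual F V)}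
    (hW : SymTotIso W) {ξ : Dual F V} (hξ : ((0 : V), ξ) ∈ W) :
    ξ ∈ (W.map (LinearMap.fst F V (Dual F V))).dualAnnihilator := by
  rw [mem_dualAnnihilator]
  rintro _ ⟨w, hw, rfl⟩
  simpa [symForm_zero_mk] using hW _ hξ w hw

theorem SymGen.zero_mk_mem {W : Submodule F (V × Dual F V)} (hW : SymGen W) {γ : Dual F V}
    (hγ : γ ∈ (W.map (LinearMap.fst F V (Dual F V))).dualAnnihilator) :
    ((0 : V), γ) ∈ W := by
  have hz : ∀ w ∈ W, symForm w ((0 : V), γ) = 0 := fun w hw => by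
    rw [symForm_swap, symForm_zero_mk, (mem_dualAnnihilator _).mp hγ w.1 ⟨w, hw, rfl⟩, neg_zero]
  rw [← hW.2 _ (hW.1.sup_span_singleton hz) le_sup_left]
  exact mem_sup_right (mem_span_singleton_self _)

theorem SymGen.isCompl_prod_dualAnnihilator {W : Submodule F (V × Dual F V)} (hW : SymGen W)
    {B : Submodule F V} (hB : IsCompl (W.map (LinearMap.fst F V (Dual F V))) B) :
    IsCompl W (B.prod B.dualAnnihilator) := by
  have hB' := Subspace.isCompl_dualAnnihilator hB
  constructor
  · rw [disjoint_iff, eq_bot_iff]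
    rintro ⟨x, ξ⟩ ⟨hxξ, hx, hξ⟩
    have hx0 : x = 0 := (mem_bot F).mp <| hB.disjoint.le_bot ⟨⟨_, hxξ, rfl⟩, hx⟩
    subst hx0
    have hξ0 : ξ = 0 :=
      (mem_bot F).mp <| hB'.disjoint.le_bot ⟨hW.1.mem_dualAnnihilator_map_fst hxξ, hξ⟩
    simp [hξ0]
  · rw [codisjoint_iff, eq_top_iff]
    rintro ⟨v, φ⟩ -
    obtain ⟨_, ⟨⟨a, α⟩, haα, rfl⟩, b, hb, rfl⟩ := mem_sup.mp (hB.sup_eq_top ▸ mem_top : v ∈ _)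
    obtain ⟨γ, hγ, δ, hδ, hγδ⟩ := mem_sup.mp (hB'.sup_eq_top ▸ mem_top : φ - α ∈ _)
    have hW' : ((a, α + γ) : V × Dual F V) ∈ W := by
      simpa using W.add_mem haα (hW.zero_mk_mem hγ)
    refine mem_sup.mpr ⟨_, hW', (b, δ), ⟨hb, hδ⟩, ?_⟩
    ext
    · rfl
    · simp only [Prod.snd_add]
      rw [add_assoc, hγδ, add_sub_cancel]

end

theorem stmt_8_general {F V : Type*} [Field F] [AddCommGroup V] [Module F V]
    (W : Submodule F (V × Module.Dual F V)) (hW : SymGen W) :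
    ∃ W' : Submodule F (V × Module.Dual F V),
      SymGen W' ∧ W ⊓ W' = ⊥ ∧ W ⊔ W' = ⊤ := by
  obtain ⟨B, hB⟩ := Submodule.exists_isCompl (W.map (LinearMap.fst F V (Module.Dual F V)))
  have hcompl := hW.isCompl_prod_dualAnnihilator hB
  exact ⟨_, symGen_prod_dualAnnihilator B, hcompl.inf_eq_bot, hcompl.sup_eq_top⟩

/-- Every generator of the symplectic polar space `S_f` on `V̄ = V ⊕ V*`
admits a complement. -/
theorem stmt_8 {F V : Type*} [Field F] [AddCommGroup V] [Module F V]
    (hV : ¬ Module.Finite F V)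
    (W : Submodule F (V × Module.Dual F V)) (hW : SymGen W) :
    ∃ W' : Submodule F (V × Module.Dual F V),
      SymGen W' ∧ W ⊓ W' = ⊥ ∧ W ⊔ W' = ⊤ :=
  stmt_8_general W hW
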